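/- arXiv:1701.08535 — 2 statements merged into one kernel-verified Lean document; each statement's English description precedes it below -/
import Mathlib

section
/- Fix integers k ≥ 1 and a, b. Then for every integer x with x + b ≥ 0 and x + a ≥ 0: ∑_{l=0}^{k} [(x+b+l)!/(x+a+l)!] · 1/[∏_{j=0, j≠l}^{k} (l-j)] = [(b-a)(b-a-1)⋯(b-a-k+1)/k!] · (x+b)!/(x+a+k)!. -/
open Finset Nat fwdDiff

private lemma prod_sub_range (l : ℕ) : ∏ j ∈ Finset.range l, ((l : ℚ) - j) = l ! := by
  induction l with
  | zero => simp
  | succ n ih =>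
      rw [Finset.prod_range_succ']
      push_cast
      simp only [sub_zero]
      rw [show (∏ j ∈ Finset.range n, ((n:ℚ) + 1 - (j + 1))) = ∏ j ∈ Finset.range n, ((n:ℚ) - j)
        by apply Finset.prod_congr rfl; intro j _; ring]
      rw [ih, Nat.factorial_succ]
      push_cast; ring

private lemma prod_neg_add_one (n : ℕ) :
    ∏ i ∈ Finset.range n, (-((i : ℚ) + 1)) = (-1) ^ n * n ! := by
  induction n with
  | zero => simp
  | succ m ih =>
      rw [Finset.prod_range_succ, ih, Nat.factorial_succ, pow_succ]
      push_cast; ring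

private lemma lagrange_denom (k l : ℕ) (hl : l ≤ k) :
    ∏ j ∈ (Finset.range (k + 1)).erase l, ((l : ℚ) - j)
      = (-1) ^ (k - l) * l ! * (k - l)! := by
  have hset : (Finset.range (k + 1)).erase l = Finset.range l ∪ Finset.Ico (l+1) (k+1) := by
    ext j
    simp only [Finset.mem_erase, Finset.mem_range, Finset.mem_union, Finset.mem_Ico]
    omega
  have hdisj : Disjoint (Finset.range l) (Finset.Ico (l+1) (k+1)) := by
    rw [Finset.disjoint_left]
    intro j hj1 hj2
    simp only [Finset.mem_range] at hj1
    simp only [Finset.mem_Ico] at hj2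
    omega
  rw [hset, Finset.prod_union hdisj, prod_sub_range]
  have h2 : ∏ j ∈ Finset.Ico (l+1) (k+1), ((l : ℚ) - j)
      = (-1) ^ (k - l) * (k - l)! := by
    rw [Finset.prod_Ico_eq_prod_range]
    have hkl : k + 1 - (l + 1) = k - l := by omega
    rw [hkl]
    have : ∀ i ∈ Finset.range (k - l), ((l : ℚ) - ((l + 1 + i : ℕ) : ℚ)) = -((i:ℚ) + 1) := by
      intro i _; push_cast; ring
    rw [Finset.prod_congr rfl this, prod_neg_add_one]
  rw [h2]; ring

private lemma fwdDiff_iter_const_smul' {M G : Type*} [AddCommMonoid M] [AddCommGroup G]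
    (h : M) (r : ℚ) [Module ℚ G] (f : M → G) (n : ℕ) :
    (fwdDiff h)^[n] (r • f) = r • (fwdDiff h)^[n] f := by
  induction n generalizing f with
  | zero => rfl
  | succ m ih => rw [Function.iterate_succ_apply, fwdDiff_const_smul, ih,
      Function.iterate_succ_apply]

private lemma key (x b : ℤ) (hxb : 0 ≤ x + b) :
    ∀ (k : ℕ) (a : ℤ), 0 ≤ x + a →
      (fwdDiff (1:ℤ))^[k] (fun n : ℤ => ((x + b + n).toNat.factorial : ℚ) / ((x + a + n).toNat.factorial : ℚ)) 0
        = (∏ m ∈ Finset.range k, ((b : ℚ) - a - m)) *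
            ((x + b).toNat.factorial : ℚ) / ((x + a + k).toNat.factorial : ℚ) := by
  intro k
  induction k with
  | zero =>
      intro a _
      simp
  | succ k ih =>
      intro a ha
      rw [Function.iterate_succ_apply]
      have hptw : ∀ n : ℤ, 0 ≤ n →
          fwdDiff (1:ℤ) (fun n : ℤ => ((x + b + n).toNat.factorial : ℚ) / ((x + a + n).toNat.factorial : ℚ)) n
            = ((b : ℚ) - a) * (((x + b + n).toNat.factorial : ℚ) / ((x + (a+1) + n).toNat.factorial : ℚ)) := by
        intro n hn
        have hp : (0:ℤ) ≤ x + b + n := by omega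
        have hq : (0:ℤ) ≤ x + a + n := by omega
        have h1 : (x + b + (n + 1)).toNat = (x + b + n).toNat + 1 := by omega
        have h2 : (x + a + (n + 1)).toNat = (x + a + n).toNat + 1 := by omega
        have h3 : (x + (a + 1) + n).toNat = (x + a + n).toNat + 1 := by omega
        simp only [fwdDiff, h1, h2, h3, Nat.factorial_succ]
        have hpq : ((x + b + n).toNat : ℚ) - ((x + a + n).toNat : ℚ) = (b : ℚ) - a := by
          have e1 : ((x + b + n).toNat : ℤ) = x + b + n := Int.toNat_of_nonneg hp
          have e2 : ((x + a + n).toNat : ℤ) = x + a + n := Int.toNat_of_nonneg hq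
          have : ((x + b + n).toNat : ℚ) = ((x:ℚ) + b + n) := by
            exact_mod_cast congrArg (Int.cast : ℤ → ℚ) e1
          rw [this]
          have : ((x + a + n).toNat : ℚ) = ((x:ℚ) + a + n) := by
            exact_mod_cast congrArg (Int.cast : ℤ → ℚ) e2
          rw [this]; ring
        have hfp : ((x + b + n).toNat.factorial : ℚ) ≠ 0 := by positivity
        have hfq : ((x + a + n).toNat.factorial : ℚ) ≠ 0 := by positivity
        have hq1 : (((x + a + n).toNat : ℚ) + 1) ≠ 0 := by positivity
        field_simp
        push_cast
        linear_combination (((x + b + n).toNat.factorial : ℚ)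
          * ((x + a + n).toNat.factorial : ℚ)) * hpq
      -- replace Δ F_a by (b-a) • F_{a+1} inside Δ^[k] evaluated at 0
      have heq : (fwdDiff (1:ℤ))^[k]
          (fwdDiff (1:ℤ) (fun n : ℤ => ((x + b + n).toNat.factorial : ℚ) / ((x + a + n).toNat.factorial : ℚ))) 0
        = (fwdDiff (1:ℤ))^[k]
          (((b : ℚ) - a) • fun n : ℤ => ((x + b + n).toNat.factorial : ℚ) / ((x + (a+1) + n).toNat.factorial : ℚ)) 0 := by
        rw [fwdDiff_iter_eq_sum_shift, fwdDiff_iter_eq_sum_shift]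
        apply Finset.sum_congr rfl
        intro l hl
        congr 1
        have hl0 : (0:ℤ) ≤ 0 + l • (1:ℤ) := by simp
        rw [hptw _ hl0]
        simp [Pi.smul_apply, smul_eq_mul]
      rw [heq, fwdDiff_iter_const_smul', Pi.smul_apply, smul_eq_mul,
        ih (a + 1) (by omega)]
      have hprod : ∏ m ∈ Finset.range (k + 1), ((b : ℚ) - a - m)
          = ((b : ℚ) - a) * ∏ m ∈ Finset.range k, ((b : ℚ) - (a + 1) - m) := by
        rw [Finset.prod_range_succ']
        have : ∀ m ∈ Finset.range k, ((b:ℚ) - a - (m + 1 : ℕ)) = ((b:ℚ) - (a+1) - m) := by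
          intro m _; push_cast; ring
        rw [Finset.prod_congr rfl this]
        simp [mul_comm]
      rw [hprod]
      have : x + (a + 1) + (k : ℤ) = x + a + ((k:ℤ) + 1) := by ring
      rw [this]
      push_cast
      ring

/-- Fix k ≥ 1 and integers a, b. Then for every integer x with x+b ≥ 0 and x+a ≥ 0:
∑_{l=0}^{k} [(x+b+l)!/(x+a+l)!] / ∏_{j=0, j≠l}^{k} (l-j)
  = [(b-a)(b-a-1)⋯(b-a-k+1)/k!] · (x+b)!/(x+a+k)!. -/
theorem stmt7 (k : ℕ) (hk : 1 ≤ k) (a b : ℤ) (x : ℤ) (hxb : 0 ≤ x + b) (hxa : 0 ≤ x + a) :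
    ∑ l ∈ Finset.range (k + 1),
        ((x + b + l).toNat.factorial : ℚ) / ((x + a + l).toNat.factorial : ℚ)
          * (1 / ∏ j ∈ (Finset.range (k + 1)).erase l, ((l : ℚ) - j))
      = (∏ m ∈ Finset.range k, ((b : ℚ) - a - m)) / (k.factorial : ℚ)
          * (((x + b).toNat.factorial : ℚ) / ((x + a + k).toNat.factorial : ℚ)) := by
  have hkey := key x b hxb k a hxa
  rw [fwdDiff_iter_eq_sum_shift] at hkey
  have hterm : ∀ l ∈ Finset.range (k + 1),
      ((x + b + l).toNat.factorial : ℚ) / ((x + a + l).toNat.factorial : ℚ)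
          * (1 / ∏ j ∈ (Finset.range (k + 1)).erase l, ((l : ℚ) - j))
        = (1 / (k.factorial : ℚ)) *
          (((-1 : ℤ) ^ (k - l) * (k.choose l) : ℤ) •
            (((x + b + (0 + l • (1:ℤ))).toNat.factorial : ℚ) / ((x + a + (0 + l • (1:ℤ))).toNat.factorial : ℚ))) := by
    intro l hl
    simp only [Finset.mem_range] at hl
    have hlk : l ≤ k := by omega
    rw [lagrange_denom k l hlk]
    have hsm : (0:ℤ) + l • (1:ℤ) = (l : ℤ) := by simp
    rw [hsm]
    rw [zsmul_eq_mul]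
    push_cast
    rw [Nat.cast_choose ℚ hlk]
    have h1 : ((l)! : ℚ) ≠ 0 := by positivity
    have h2 : (((k-l))! : ℚ) ≠ 0 := by positivity
    have h3 : ((k)! : ℚ) ≠ 0 := by positivity
    have h4 : ((-1 : ℚ)) ^ (k - l) ≠ 0 := by
      apply pow_ne_zero; norm_num
    field_simp
    ring_nf
    have h5 : ((-1:ℚ)) ^ ((k - l) * 2) = 1 := by
      rw [mul_comm, pow_mul]; norm_num
    rw [h5]
  rw [Finset.sum_congr rfl hterm, ← Finset.mul_sum, hkey]
  ring
end

section
/- Let n, r, s, u, v be integers with 1 ≤ s ≤ n - 1 and 1 ≤ r ≤ n - 1. Then the sum ∑_{l=v+s-n}^{v} [∏_{j=u+r-n+1}^{u-1} (l - j)] / [∏_{j=v+s-n, j≠l}^{v} (l - j)] equals: ((n-r-1)!/((n-s)!·(s-r-1)!)) · ∏_{j=1}^{s-r-1} (v - u + s - r - j) when s > r + 1; equals 1 when s = r + 1; and equals 0 when s < r + 1. -/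
open Finset

set_option linter.unusedTactic false
set_option linter.unusedVariables false


lemma prod_Icc_int (f : ℤ → ℚ) (a : ℤ) : ∀ m : ℕ,
    ∏ x ∈ Icc a (a + m - 1), f x = ∏ i ∈ range m, f (a + i) := by
  intro m
  induction m with
  | zero => simp
  | succ m ih =>
    have h1 : Icc a (a + (m+1:ℕ) - 1) = insert (a + m) (Icc a (a + m - 1)) := by
      ext x; simp only [mem_Icc, mem_insert]; push_cast; omega
    have h2 : (a + (m:ℤ)) ∉ Icc a (a + (m:ℤ) - 1) := by simp
    rw [h1, prod_insert h2, ih, prod_range_succ]; ring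

lemma sum_Icc_int (f : ℤ → ℚ) (a : ℤ) : ∀ m : ℕ,
    ∑ x ∈ Icc a (a + m - 1), f x = ∑ i ∈ range m, f (a + i) := by
  intro m
  induction m with
  | zero => simp
  | succ m ih =>
    have h1 : Icc a (a + (m+1:ℕ) - 1) = insert (a + m) (Icc a (a + m - 1)) := by
      ext x; simp only [mem_Icc, mem_insert]; push_cast; omega
    have h2 : (a + (m:ℤ)) ∉ Icc a (a + (m:ℤ) - 1) := by simp
    rw [h1, sum_insert h2, ih, sum_range_succ]; ring


noncomputable def fall (d : ℕ) (c : ℤ) (x : ℤ) : ℚ := ∏ k ∈ Finset.range d, ((x : ℚ) - c - k)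

lemma fall_diff (e : ℕ) (c x : ℤ) :
    fall (e+1) c x - fall (e+1) c (x+1) = -((e:ℚ)+1) * fall e c x := by
  unfold fall
  rw [prod_range_succ, prod_range_succ']
  push_cast
  have : ∏ k ∈ range e, ((x:ℚ) + 1 - c - (k + 1)) = ∏ k ∈ range e, ((x:ℚ) - c - k) := by
    apply prod_congr rfl; intro k _; ring
  rw [this]; ring

lemma Sstep (f : ℤ → ℚ) (m : ℕ) (a : ℤ) :
    ∑ i ∈ range (m+2), (-1:ℚ)^i * ((m+1).choose i) * f (a+i)
      = ∑ i ∈ range (m+1), (-1:ℚ)^i * (m.choose i) * (f (a+i) - f (a+i+1)) := by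
  have hA : ∑ i ∈ range (m+1), (-1:ℚ)^i * (m.choose i) * f (a+i)
      = -(∑ i ∈ range m, (-1:ℚ)^i * (m.choose (i+1)) * f (a+i+1)) + f a := by
    rw [sum_range_succ']
    rw [← Finset.sum_neg_distrib]
    congr 1
    · apply sum_congr rfl; intro i _; push_cast
      have : a + (↑i + 1) = a + ↑i + 1 := by ring
      rw [this]; ring
    · simp
  have hT : ∑ i ∈ range (m+1), (-1:ℚ)^i * (m.choose (i+1)) * f (a+i+1)
      = ∑ i ∈ range m, (-1:ℚ)^i * (m.choose (i+1)) * f (a+i+1) := by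
    rw [sum_range_succ, Nat.choose_succ_self]; simp
  have expand : ∑ i ∈ range (m+1), (-1:ℚ)^i * (m.choose i) * (f (a+i) - f (a+i+1))
      = (∑ i ∈ range (m+1), (-1:ℚ)^i * (m.choose i) * f (a+i))
        - ∑ i ∈ range (m+1), (-1:ℚ)^i * (m.choose i) * f (a+i+1) := by
    rw [← Finset.sum_sub_distrib]
    apply sum_congr rfl; intro i _; ring
  rw [expand, hA]
  rw [show m+2 = (m+1)+1 from rfl, sum_range_succ']
  have step : ∑ i ∈ range (m+1), (-1:ℚ)^(i+1) * (((m+1).choose (i+1) : ℕ)) * f (a+(i+1))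
      = -(∑ i ∈ range (m+1), (-1:ℚ)^i * (m.choose i) * f (a+i+1))
        - ∑ i ∈ range (m+1), (-1:ℚ)^i * (m.choose (i+1)) * f (a+i+1) := by
    rw [← Finset.sum_neg_distrib, ← Finset.sum_sub_distrib]
    apply sum_congr rfl; intro i _
    rw [Nat.choose_succ_succ]
    push_cast
    have : a + (↑i + 1) = a + i + 1 := by ring
    rw [this]; ring
  push_cast
  rw [step, hT]
  simp
  ring

lemma key_s8 (c : ℤ) : ∀ (m d : ℕ) (a : ℤ),
    ∑ i ∈ Finset.range (m+1), (-1:ℚ)^i * (m.choose i) * fall d c (a+i)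
      = (∏ i ∈ Finset.range m, ((i:ℚ) - d)) * fall (d - m) c a := by
  intro m
  induction m with
  | zero => intro d a; simp
  | succ m ih =>
    intro d a
    rw [show m+1+1 = m+2 from rfl, Sstep (fall d c) m a]
    cases d with
    | zero =>
      have h0 : ∀ x : ℤ, fall 0 c x - fall 0 c (x+1) = 0 := by intro x; simp [fall]
      have : ∑ i ∈ range (m+1), (-1:ℚ)^i * (m.choose i) * (fall 0 c (a+i) - fall 0 c (a+i+1)) = 0 := by
        apply Finset.sum_eq_zero; intro i _; rw [h0]; ring
      rw [this, prod_range_succ']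
      simp
    | succ e =>
      have : ∑ i ∈ range (m+1), (-1:ℚ)^i * (m.choose i) * (fall (e+1) c (a+i) - fall (e+1) c (a+i+1))
          = -((e:ℚ)+1) * ∑ i ∈ range (m+1), (-1:ℚ)^i * (m.choose i) * fall e c (a+i) := by
        rw [Finset.mul_sum]
        apply sum_congr rfl; intro i _
        rw [show (a:ℤ)+i+1 = (a+i)+1 from by ring, fall_diff]
        ring
      rw [this, ih e a]
      rw [prod_range_succ']
      have hsub : e + 1 - (m + 1) = e - m := by omega
      rw [hsub]
      have : ∏ i ∈ range m, (((i:ℕ)+1:ℚ) - ((e:ℕ)+1)) = ∏ i ∈ range m, ((i:ℚ) - e) := by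
        push_cast
        apply prod_congr rfl; intro i _; ring
      push_cast
      rw [this]
      ring


lemma prod_fact (i : ℕ) : ∏ k ∈ range i, ((i:ℚ) - k) = i.factorial := by
  induction i with
  | zero => simp
  | succ i ih =>
    rw [prod_range_succ']
    have : ∏ k ∈ range i, (((i:ℕ)+1:ℚ) - ((k:ℕ)+1)) = ∏ k ∈ range i, ((i:ℚ) - k) := by
      push_cast; apply prod_congr rfl; intro k _; ring
    push_cast
    push_cast at this
    rw [this, ih, Nat.factorial_succ]
    push_cast; ring

lemma prod_neg_fact (t : ℕ) : ∏ k ∈ range t, (-(1:ℚ) - k) = (-1)^t * t.factorial := by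
  induction t with
  | zero => simp
  | succ t ih =>
    rw [prod_range_succ, ih, Nat.factorial_succ, pow_succ]
    push_cast; ring

lemma prod_sign (m : ℕ) (d : ℚ) : ∏ i ∈ range m, ((i:ℚ) - d) = (-1)^m * ∏ i ∈ range m, (d - (i:ℚ)) := by
  induction m with
  | zero => simp
  | succ m ih => rw [prod_range_succ, prod_range_succ, ih, pow_succ]; ring

lemma fact_div : ∀ (m d : ℕ), m ≤ d →
    ((d-m).factorial : ℚ) * ∏ i ∈ range m, ((d:ℚ) - i) = d.factorial := by
  intro m
  induction m with
  | zero => intro d _; simp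
  | succ m ih =>
    intro d h
    rw [prod_range_succ]
    have h1 : (d - m).factorial = (d - m) * (d - (m+1)).factorial := by
      have : d - m = (d - (m+1)) + 1 := by omega
      rw [this, Nat.factorial_succ]
    have h2 : ((d:ℚ) - m) = ((d - m : ℕ) : ℚ) := by
      rw [Nat.cast_sub (by omega : m ≤ d)]
    calc ((d-(m+1)).factorial : ℚ) * ((∏ i ∈ range m, ((d:ℚ) - i)) * ((d:ℚ) - m))
        = ((d:ℚ) - m) * ((d-(m+1)).factorial : ℚ) * ∏ i ∈ range m, ((d:ℚ) - i) := by ring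
      _ = ((d - m).factorial : ℚ) * ∏ i ∈ range m, ((d:ℚ) - i) := by
          rw [h2, h1]; push_cast; ring
      _ = d.factorial := ih d (by omega)

/-- Let n, r, s, u, v be integers with 1 ≤ s ≤ n-1 and 1 ≤ r ≤ n-1. Then
∑_{l=v+s-n}^{v} [∏_{j=u+r-n+1}^{u-1} (l-j)] / [∏_{j=v+s-n, j≠l}^{v} (l-j)]
equals ((n-r-1)!/((n-s)!(s-r-1)!)) ∏_{j=1}^{s-r-1} (v-u+s-r-j) when s > r+1;
equals 1 when s = r+1; and 0 when s < r+1. -/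
theorem stmt8 (n r s u v : ℤ) (hs1 : 1 ≤ s) (hsn : s ≤ n - 1)
    (hr1 : 1 ≤ r) (hrn : r ≤ n - 1) :
    (r + 1 < s → ∑ l ∈ Finset.Icc (v + s - n) v,
        (∏ j ∈ Finset.Icc (u + r - n + 1) (u - 1), ((l : ℚ) - j))
          / (∏ j ∈ (Finset.Icc (v + s - n) v).erase l, ((l : ℚ) - j))
      = ((n - r - 1).toNat.factorial : ℚ)
          / (((n - s).toNat.factorial : ℚ) * ((s - r - 1).toNat.factorial : ℚ))
          * ∏ j ∈ Finset.Icc 1 (s - r - 1), ((v : ℚ) - u + s - r - j)) ∧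
    (s = r + 1 → ∑ l ∈ Finset.Icc (v + s - n) v,
        (∏ j ∈ Finset.Icc (u + r - n + 1) (u - 1), ((l : ℚ) - j))
          / (∏ j ∈ (Finset.Icc (v + s - n) v).erase l, ((l : ℚ) - j)) = 1) ∧
    (s < r + 1 → ∑ l ∈ Finset.Icc (v + s - n) v,
        (∏ j ∈ Finset.Icc (u + r - n + 1) (u - 1), ((l : ℚ) - j))
          / (∏ j ∈ (Finset.Icc (v + s - n) v).erase l, ((l : ℚ) - j)) = 0) := by
  have hns : (0:ℤ) ≤ n - s := by omega
  have hnr : (0:ℤ) ≤ n - r - 1 := by omega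
  set m := (n - s).toNat with hm_def
  set d := (n - r - 1).toNat with hd_def
  have hm : (m:ℤ) = n - s := Int.toNat_of_nonneg hns
  have hd : (d:ℤ) = n - r - 1 := Int.toNat_of_nonneg hnr
  set a := v + s - n with ha_def
  set c := u + r - n + 1 with hc_def
  have hmfac : (m.factorial : ℚ) ≠ 0 := Nat.cast_ne_zero.mpr m.factorial_ne_zero
  have hmain : ∑ l ∈ Finset.Icc a v,
        (∏ j ∈ Finset.Icc c (u - 1), ((l : ℚ) - j))
          / (∏ j ∈ (Finset.Icc a v).erase l, ((l : ℚ) - j))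
      = (-1:ℚ)^m / m.factorial * ((∏ i ∈ range m, ((i:ℚ) - d)) * fall (d - m) c a) := by
    have hv : v = a + ((m+1:ℕ):ℤ) - 1 := by push_cast; omega
    rw [hv, sum_Icc_int, ← key_s8 c m d a, Finset.mul_sum]
    apply sum_congr rfl
    intro i hi
    have him : i ≤ m := by simpa [Nat.lt_succ_iff] using hi
    have hmi : ((m - i : ℕ) : ℤ) = (m:ℤ) - (i:ℤ) := by omega
    simp only [Int.cast_add, Int.cast_natCast]
    have hnum : ∏ j ∈ Finset.Icc c (u - 1), ((a:ℚ) + (i:ℚ) - (j:ℚ)) = fall d c (a + i) := by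
      have hu : u - 1 = c + ((d:ℕ):ℤ) - 1 := by omega
      rw [hu, prod_Icc_int]
      unfold fall
      apply prod_congr rfl
      intro k _
      push_cast
      ring
    have herase : (Finset.Icc a (a + ((m+1:ℕ):ℤ) - 1)).erase (a + i)
        = Finset.Icc a (a + (i:ℤ) - 1) ∪ Finset.Icc (a + i + 1) (a + (m:ℤ)) := by
      ext x
      simp only [mem_erase, mem_Icc, mem_union]
      push_cast
      omega
    have hdisj : Disjoint (Finset.Icc a (a + (i:ℤ) - 1)) (Finset.Icc (a + i + 1) (a + (m:ℤ))) := by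
      rw [Finset.disjoint_left]
      intro x hx hx'
      simp only [mem_Icc] at hx hx'
      omega
    have hp1 : ∏ j ∈ Finset.Icc a (a + (i:ℤ) - 1), ((a:ℚ) + (i:ℚ) - (j:ℚ))
        = (i.factorial : ℚ) := by
      rw [prod_Icc_int, ← prod_fact i]
      apply prod_congr rfl
      intro k _
      push_cast
      ring
    have hp2 : ∏ j ∈ Finset.Icc (a + i + 1) (a + (m:ℤ)), ((a:ℚ) + (i:ℚ) - (j:ℚ))
        = (-1:ℚ)^(m-i) * ((m-i).factorial : ℚ) := by
      have hb : a + (m:ℤ) = (a + (i:ℤ) + 1) + ((m - i : ℕ):ℤ) - 1 := by rw [hmi]; ring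
      rw [hb, prod_Icc_int, ← prod_neg_fact (m-i)]
      apply prod_congr rfl
      intro k _
      push_cast
      ring
    have hden : ∏ j ∈ (Finset.Icc a (a + ((m+1:ℕ):ℤ) - 1)).erase (a + i), ((a:ℚ) + (i:ℚ) - (j:ℚ))
        = (i.factorial : ℚ) * ((-1:ℚ)^(m-i) * ((m-i).factorial : ℚ)) := by
      rw [herase, Finset.prod_union hdisj, hp1, hp2]
    rw [hnum, hden]
    have hfac : ((m.choose i : ℕ) : ℚ) * (i.factorial : ℚ) * ((m-i).factorial : ℚ)
        = (m.factorial : ℚ) := by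
      exact_mod_cast congrArg (Nat.cast : ℕ → ℚ) (Nat.choose_mul_factorial_mul_factorial him)
    have hifac : (i.factorial : ℚ) ≠ 0 := Nat.cast_ne_zero.mpr i.factorial_ne_zero
    have hmifac : ((m-i).factorial : ℚ) ≠ 0 := Nat.cast_ne_zero.mpr (m-i).factorial_ne_zero
    have hD : (i.factorial : ℚ) * ((-1:ℚ)^(m-i) * ((m-i).factorial : ℚ)) ≠ 0 :=
      mul_ne_zero hifac (mul_ne_zero (pow_ne_zero _ (by norm_num)) hmifac)
    have hsign : (-1:ℚ)^(m-i) * (-1:ℚ)^i = (-1:ℚ)^m := by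
      rw [← pow_add]; congr 1; omega
    have hh : (-1:ℚ)^m * ((-1:ℚ)^(m-i) * (-1:ℚ)^i) = 1 := by
      rw [hsign, ← pow_add]
      exact Even.neg_one_pow ⟨m, by ring⟩
    rw [div_mul_eq_mul_div, div_eq_div_iff hD hmfac]
    linear_combination (-(((m.choose i : ℕ) : ℚ) * (i.factorial : ℚ) * ((m-i).factorial : ℚ)
        * fall d c (a + (i:ℤ)))) * hh - fall d c (a + (i:ℤ)) * hfac
  refine ⟨?_, ?_, ?_⟩
  · intro hlt
    have hmd : m ≤ d := by omega
    have hefac : ((d - m).factorial : ℚ) ≠ 0 := Nat.cast_ne_zero.mpr (d-m).factorial_ne_zero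
    have hE : (s - r - 1).toNat = d - m := by omega
    rw [hmain, hE]
    have hprod : ∏ i ∈ range m, ((i:ℚ) - d)
        = (-1:ℚ)^m * ((d.factorial:ℚ) / ((d-m).factorial:ℚ)) := by
      rw [prod_sign]
      congr 1
      rw [eq_div_iff hefac, mul_comm]
      exact fact_div m d hmd
    have hT : ∏ j ∈ Finset.Icc 1 (s - r - 1), ((v : ℚ) - u + s - r - j) = fall (d - m) c a := by
      have h1 : s - r - 1 = 1 + ((d - m : ℕ):ℤ) - 1 := by omega
      rw [h1, prod_Icc_int]
      unfold fall
      apply prod_congr rfl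
      intro k _
      rw [ha_def, hc_def]
      push_cast
      ring
    rw [hprod, hT]
    have hh2 : (-1:ℚ)^m * (-1:ℚ)^m = 1 := by
      rw [← pow_add]; exact Even.neg_one_pow ⟨m, by ring⟩
    field_simp
    linear_combination (fall (d - m) c a) * hh2
  · intro heq
    have hdm : d = m := by omega
    rw [hmain, hdm]
    have hprod : ∏ i ∈ range m, ((i:ℚ) - m) = (-1:ℚ)^m * (m.factorial:ℚ) := by
      rw [prod_sign, prod_fact]
    have hf0 : fall (m - m) c a = 1 := by simp [fall]
    rw [hprod, hf0]
    have hh2 : (-1:ℚ)^m * (-1:ℚ)^m = 1 := by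
      rw [← pow_add]; exact Even.neg_one_pow ⟨m, by ring⟩
    field_simp
    linear_combination hh2
  · intro hlt
    have hdm : d < m := by omega
    rw [hmain]
    have hprod : ∏ i ∈ range m, ((i:ℚ) - d) = 0 :=
      Finset.prod_eq_zero (mem_range.mpr hdm) (by simp)
    rw [hprod]
    ring
end
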